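/- Let M be an n×n real symmetric negative definite matrix all of whose off-diagonal entries are nonnegative (M_{ij} ≥ 0 for all i ≠ j), and assume M is irreducible, i.e. for every pair of indices i ≠ j there exists a chain of indices i = k₀, k₁, …, k_m = j with M_{k_l k_{l+1}} ≠ 0 for every 0 ≤ l < m. If u ∈ ℝⁿ has all coordinates nonnegative and u ≠ 0, then every coordinate of M⁻¹ u is strictly negative. -/

import Mathlib

/-!
Let `v = M⁻¹ u`, so `M v = u ≥ 0`. Splitting `v = v⁺ - v⁻`, the off-diagonal signs give
`v⁺ ⬝ M v⁻ ≥ 0` (the supports are disjoint), so `v⁺ ⬝ M v⁺ = v⁺ ⬝ u + v⁺ ⬝ M v⁻ ≥ 0`,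
and negative definiteness forces `v⁺ = 0`, i.e. `v ≤ 0`. Then in `(M v)ᵢ = Σⱼ Mᵢⱼ vⱼ ≥ 0`
every term with `j ≠ i` is `≤ 0`, so `vᵢ = 0` forces `vⱼ = 0` whenever `Mᵢⱼ ≠ 0`.
By irreducibility one zero coordinate would make `v = 0`, hence `u = 0`.
-/

namespace Matrix

variable {ι : Type*} [Fintype ι] {M : Matrix ι ι ℝ}

theorem isUnit_det_of_dotProduct_mulVec_neg [DecidableEq ι]
    (hneg : ∀ x : ι → ℝ, x ≠ 0 → x ⬝ᵥ M *ᵥ x < 0) : IsUnit M.det := by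
  refine isUnit_iff_ne_zero.mpr fun hdet => ?_
  obtain ⟨x, hx0, hx⟩ := exists_mulVec_eq_zero_iff.mpr hdet
  simpa [hx] using hneg x hx0

theorem dotProduct_mulVec_nonneg_of_offDiag_nonneg (hoff : ∀ i j, i ≠ j → 0 ≤ M i j)
    {x w : ι → ℝ} (hx : 0 ≤ x) (hw : 0 ≤ w) (hxw : ∀ i, x i = 0 ∨ w i = 0) :
    0 ≤ x ⬝ᵥ M *ᵥ w := by
  refine Finset.sum_nonneg fun i _ => ?_
  rcases hxw i with hxi | hwi
  · simp [hxi]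
  refine mul_nonneg (hx i) (Finset.sum_nonneg fun j _ => ?_)
  rcases eq_or_ne i j with rfl | hij
  · simp [hwi]
  · exact mul_nonneg (hoff i j hij) (hw j)

theorem nonpos_of_mulVec_nonneg (hneg : ∀ x : ι → ℝ, x ≠ 0 → x ⬝ᵥ M *ᵥ x < 0)
    (hoff : ∀ i j, i ≠ j → 0 ≤ M i j) {v : ι → ℝ} (hMv : 0 ≤ M *ᵥ v) : v ≤ 0 := by
  rw [← posPart_eq_zero]
  by_contra hpos
  have hcross : 0 ≤ v⁺ ⬝ᵥ M *ᵥ v⁻ := by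
    refine dotProduct_mulVec_nonneg_of_offDiag_nonneg hoff (posPart_nonneg v)
      (negPart_nonneg v) fun i => ?_
    rcases le_total 0 (v i) with hvi | hvi
    · exact .inr (negPart_eq_zero.mpr hvi)
    · exact .inl (posPart_eq_zero.mpr hvi)
  have hsplit : v⁺ ⬝ᵥ M *ᵥ v⁺ = v⁺ ⬝ᵥ M *ᵥ v + v⁺ ⬝ᵥ M *ᵥ v⁻ := by
    rw [← dotProduct_add, ← mulVec_add, ← eq_add_of_sub_eq (posPart_sub_negPart v)]
  have hsource : 0 ≤ v⁺ ⬝ᵥ M *ᵥ v :=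
    Finset.sum_nonneg fun i _ => mul_nonneg (posPart_nonneg v i) (hMv i)
  linarith [hneg _ hpos]

theorem apply_eq_zero_of_apply_eq_zero_of_ne_zero (hoff : ∀ i j, i ≠ j → 0 ≤ M i j)
    {v : ι → ℝ} (hv : v ≤ 0) (hMv : 0 ≤ M *ᵥ v) {i j : ι} (hvi : v i = 0)
    (hij : M i j ≠ 0) : v j = 0 := by
  have hterms : ∀ l ∈ Finset.univ, M i l * v l ≤ 0 := fun l _ => by
    rcases eq_or_ne i l with rfl | hil
    · simp [hvi]
    · exact mul_nonpos_of_nonneg_of_nonpos (hoff i l hil) (hv l)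
  have hsum : ∑ l, M i l * v l = 0 := le_antisymm (Finset.sum_nonpos hterms) (hMv i)
  have hj : M i j * v j = 0 :=
    (Finset.sum_eq_zero_iff_of_nonpos hterms).mp hsum j (Finset.mem_univ j)
  exact (mul_eq_zero.mp hj).resolve_left hij

theorem apply_last_eq_zero_of_chain (hoff : ∀ i j, i ≠ j → 0 ≤ M i j) {v : ι → ℝ}
    (hv : v ≤ 0) (hMv : 0 ≤ M *ᵥ v) {m : ℕ} {k : Fin (m + 1) → ι}
    (hk : ∀ l : Fin m, M (k l.castSucc) (k l.succ) ≠ 0) (h0 : v (k 0) = 0) :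
    v (k (Fin.last m)) = 0 := by
  induction Fin.last m using Fin.induction with
  | zero => exact h0
  | succ l ih => exact apply_eq_zero_of_apply_eq_zero_of_ne_zero hoff hv hMv ih (hk l)

end Matrix

theorem invMulVec_neg_of_negdef_offdiag_nonneg_irreducible_general
    {n : ℕ} (M : Matrix (Fin n) (Fin n) ℝ)
    (hneg : ∀ x : Fin n → ℝ, x ≠ 0 → dotProduct x (M.mulVec x) < 0)
    (hoff : ∀ i j : Fin n, i ≠ j → 0 ≤ M i j)
    (hirr : ∀ i j : Fin n, i ≠ j →
      ∃ (m : ℕ) (k : Fin (m + 1) → Fin n), k 0 = i ∧ k (Fin.last m) = j ∧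
        ∀ l : Fin m, M (k l.castSucc) (k l.succ) ≠ 0)
    (u : Fin n → ℝ) (hu : ∀ i, 0 ≤ u i) (hu0 : u ≠ 0) :
    ∀ i, M⁻¹.mulVec u i < 0 := by
  set v := M⁻¹.mulVec u
  have hdet : IsUnit M.det := Matrix.isUnit_det_of_dotProduct_mulVec_neg hneg
  have hMv : M.mulVec v = u := by
    rw [Matrix.mulVec_mulVec, Matrix.mul_nonsing_inv _ hdet, Matrix.one_mulVec]
  have hMv_nonneg : 0 ≤ M.mulVec v := hMv ▸ hu
  have hv : v ≤ 0 := Matrix.nonpos_of_mulVec_nonneg hneg hoff hMv_nonneg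
  intro i
  refine (hv i).lt_of_ne fun hvi => hu0 ?_
  have hzero : v = 0 := funext fun j => by
    rcases eq_or_ne i j with rfl | hij
    · exact hvi
    obtain ⟨m, k, rfl, rfl, hk⟩ := hirr i j hij
    exact Matrix.apply_last_eq_zero_of_chain hoff hv hMv_nonneg hk hvi
  rw [← hMv, hzero, Matrix.mulVec_zero]

/-- Let `M` be an `n × n` real symmetric negative definite matrix all of whose
off-diagonal entries are nonnegative, and assume `M` is irreducible (for every pair
of indices `i ≠ j` there is a chain `i = k₀, k₁, …, k_m = j` with
`M (k l) (k (l+1)) ≠ 0` for all `l`).  If `u ∈ ℝⁿ` has all coordinates nonnegative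
and `u ≠ 0`, then every coordinate of `M⁻¹ u` is strictly negative. -/
theorem invMulVec_neg_of_negdef_offdiag_nonneg_irreducible
    {n : ℕ} (M : Matrix (Fin n) (Fin n) ℝ)
    (hsymm : M.IsSymm)
    (hneg : ∀ x : Fin n → ℝ, x ≠ 0 → dotProduct x (M.mulVec x) < 0)
    (hoff : ∀ i j : Fin n, i ≠ j → 0 ≤ M i j)
    (hirr : ∀ i j : Fin n, i ≠ j →
      ∃ (m : ℕ) (k : Fin (m + 1) → Fin n), k 0 = i ∧ k (Fin.last m) = j ∧
        ∀ l : Fin m, M (k l.castSucc) (k l.succ) ≠ 0)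
    (u : Fin n → ℝ) (hu : ∀ i, 0 ≤ u i) (hu0 : u ≠ 0) :
    ∀ i, M⁻¹.mulVec u i < 0 :=
  invMulVec_neg_of_negdef_offdiag_nonneg_irreducible_general M hneg hoff hirr u hu hu0
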